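/- Let R be a ring. The following are equivalent: (a) the dual Goldie torsion theory τ_cG is splitting and cohereditary, i.e. every left R-module M has submodules T and F with M = T ⊕ F, T τ_cG-torsion and F τ_cG-torsionfree, and moreover every homomorphic image of a τ_cG-torsionfree left R-module is τ_cG-torsionfree; (b) R is isomorphic as a ring to a direct product T × S, where T is a left almost small ring and S is a left V-ring. -/

import Mathlib

universe u

/-- A left `R`-module `K` is a *small module* if there exist a left `R`-module `L` and an
injective `R`-linear map `f : K → L` whose image is a superfluous submodule of `L`. -/
def IsSmallModule (R : Type u) [Ring R] (K : Type u) [AddCommGroup K] [Module R K] : Prop :=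
  ∃ (L : Type u) (_ : AddCommGroup L) (_ : Module R L) (f : K →ₗ[R] L),
    Function.Injective f ∧
      ∀ X : Submodule R L, LinearMap.range f ⊔ X = ⊤ → X = ⊤

/-- `Z*(M)` is the sum of all submodules of `M` that are small modules. -/
def ZStar (R : Type u) [Ring R] (M : Type u) [AddCommGroup M] [Module R M] : Submodule R M :=
  sSup {N : Submodule R M | IsSmallModule R ↥N}

/-- A left `R`-module `M` is `τ_cG`-torsion if `Z*(V/U) ≠ 0` for all submodules `U ⊊ V ⊆ M`. -/
def IsCGTorsion (R : Type u) [Ring R] (M : Type u) [AddCommGroup M] [Module R M] : Prop :=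
  ∀ U V : Submodule R M, U < V → ZStar R (↥V ⧸ Submodule.comap V.subtype U) ≠ ⊥

/-!
If `τ_cG` splits and is cohereditary, write `R = A ⊕ B` with `A` torsion and `B` torsionfree.
There is no nonzero map from a torsion module to a torsionfree one, nor, by coheredity, from a
torsionfree module to a torsion one. Hence `A` and `B` are two-sided ideals, the component `e` of
`1` in `A` is a central idempotent, and in every module `M` the torsion part contains `e M` and the
torsionfree part contains `(1 - e) M`: the torsion modules are those on which `e` acts as the
identity, the torsionfree ones those killed by `e`. Conversely such an idempotent makes `τ_cG`
splitting (`M = e M ⊕ (1 - e) M`) and cohereditary.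

Such idempotents correspond to decompositions `R ≃ T × S`. Modules over a factor are the
`R`-modules on which its idempotent acts as the identity, and being small does not depend on the
ring, since `N ≪ L` implies `e N ≪ e L`. So the condition on `e` says that `T` is left almost small
and that `S` has no nonzero small modules. The latter means that `S` is a left V-ring: a simple
module that is not injective is not a summand of an injective module containing it, hence small
in it; and over a V-ring a superfluous submodule lies in the kernel of every map to a simple,
hence injective, module, and these maps separate points.
-/
open Submodule

section Superfluous

variable {R : Type*} [Ring R] {L L' : Type*} [AddCommGroup L] [Module R L]
  [AddCommGroup L'] [Module R L']

def Submodule.IsSuperfluous (N : Submodule R L) : Prop :=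
  ∀ X : Submodule R L, N ⊔ X = ⊤ → X = ⊤

theorem Submodule.IsSuperfluous.map {N : Submodule R L} (hN : N.IsSuperfluous)
    (p : L →ₗ[R] L') (hp : Function.Surjective p) : (N.map p).IsSuperfluous := by
  intro X hX
  have : N ⊔ X.comap p = ⊤ := by
    rw [eq_top_iff]
    intro l _
    obtain ⟨_, ⟨n, hn, rfl⟩, x, hx, hnx⟩ := mem_sup.1 (hX ▸ mem_top : p l ∈ N.map p ⊔ X)
    refine mem_sup.2 ⟨n, hn, l - n, ?_, add_sub_cancel n l⟩
    rwa [mem_comap, map_sub, ← hnx, add_sub_cancel_left]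
  rw [← map_comap_eq_of_surjective hp X, hN _ this, map_top, LinearMap.range_eq_top.2 hp]

end Superfluous

section ZStar

variable {R : Type u} [Ring R] {M N : Type u} [AddCommGroup M] [Module R M]
  [AddCommGroup N] [Module R N]

theorem IsSmallModule.of_linearEquiv (e : M ≃ₗ[R] N) (h : IsSmallModule R M) :
    IsSmallModule R N := by
  obtain ⟨L, _, _, f, hf, hsup⟩ := h
  refine ⟨L, _, _, f ∘ₗ e.symm.toLinearMap, hf.comp e.symm.injective, ?_⟩
  rwa [LinearMap.range_comp, LinearEquiv.range, Submodule.map_top]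

theorem zStar_eq_bot_iff :
    ZStar R M = ⊥ ↔ ∀ P : Submodule R M, IsSmallModule R P → P = ⊥ :=
  sSup_eq_bot

theorem zStar_eq_bot_of_injective (g : N →ₗ[R] M) (hg : Function.Injective g)
    (h : ZStar R M = ⊥) : ZStar R N = ⊥ := by
  rw [zStar_eq_bot_iff] at h ⊢
  intro P hP
  apply map_injective_of_injective hg
  rw [Submodule.map_bot]
  exact h _ (hP.of_linearEquiv (P.equivMapOfInjective g hg))

theorem zStar_ne_bot_of_isSmallModule [Nontrivial M] (h : IsSmallModule R M) :
    ZStar R M ≠ ⊥ := by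
  rw [Ne, zStar_eq_bot_iff]
  intro hbot
  exact top_ne_bot (hbot ⊤ (h.of_linearEquiv topEquiv.symm))

theorem nontrivial_quotient_of_lt {U V : Submodule R M} (h : U < V) :
    Nontrivial (V ⧸ U.comap V.subtype) := by
  rw [Submodule.Quotient.nontrivial_iff, Ne, comap_subtype_eq_top]
  exact not_le_of_gt h

theorem IsCGTorsion.zStar_ne_bot_of_ne_bot (h : IsCGTorsion R M) {P : Submodule R M}
    (hP : P ≠ ⊥) : ZStar R P ≠ ⊥ := by
  have := h ⊥ P (bot_lt_iff_ne_bot.2 hP)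
  rw [comap_bot, ker_subtype] at this
  exact fun hbot => this (zStar_eq_bot_of_injective (quotEquivOfEqBot ⊥ rfl).toLinearMap
    (LinearEquiv.injective _) hbot)

theorem IsCGTorsion.zStar_ne_bot [Nontrivial M] (h : IsCGTorsion R M) : ZStar R M ≠ ⊥ :=
  fun hbot => h.zStar_ne_bot_of_ne_bot top_ne_bot
    (zStar_eq_bot_of_injective topEquiv.toLinearMap topEquiv.injective hbot)

theorem IsCGTorsion.linearMap_eq_zero (h : IsCGTorsion R M) (hN : ZStar R N = ⊥)
    (g : M →ₗ[R] N) : g = 0 := by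
  by_contra hg
  have := h (LinearMap.ker g) ⊤ (lt_top_iff_ne_top.2 (mt LinearMap.ker_eq_top.1 hg))
  rw [← LinearMap.ker_comp] at this
  let e := (g ∘ₗ (⊤ : Submodule R M).subtype).quotKerEquivRange
  exact this (zStar_eq_bot_of_injective e.toLinearMap e.injective
    (zStar_eq_bot_of_injective (LinearMap.range _).subtype (injective_subtype _) hN))

end ZStar

section Splitting

variable (R : Type u) [Ring R]

def IsCGSplitting : Prop :=
  ∀ (M : Type u) [AddCommGroup M] [Module R M],
    ∃ T F : Submodule R M, IsCompl T F ∧ IsCGTorsion R T ∧ ZStar R F = ⊥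

def IsCGCohereditary : Prop :=
  ∀ (M : Type u) [AddCommGroup M] [Module R M] (N : Type u) [AddCommGroup N] [Module R N]
    (f : M →ₗ[R] N), Function.Surjective f → ZStar R M = ⊥ → ZStar R N = ⊥

/-- The τ_cG-torsion modules are those on which `e` acts as the identity, the τ_cG-torsionfree
ones those killed by `e`. -/
structure IsCGIdempotent (e : R) : Prop where
  isIdempotentElem : IsIdempotentElem e
  comm : ∀ r, e * r = r * e
  zStar_ne_bot : ∀ (M : Type u) [AddCommGroup M] [Module R M] [Nontrivial M],
    (∀ m : M, e • m = m) → ZStar R M ≠ ⊥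
  zStar_eq_bot : ∀ (M : Type u) [AddCommGroup M] [Module R M],
    (∀ m : M, e • m = 0) → ZStar R M = ⊥

variable {R} {M N : Type u} [AddCommGroup M] [Module R M] [AddCommGroup N] [Module R N]

theorem IsCGCohereditary.linearMap_eq_zero (hc : IsCGCohereditary R) (hN : ZStar R N = ⊥)
    (hM : IsCGTorsion R M) (g : N →ₗ[R] M) : g = 0 := by
  rw [← LinearMap.range_eq_bot]
  by_contra hg
  exact hM.zStar_ne_bot_of_ne_bot hg
    (hc N _ g.rangeRestrict g.surjective_rangeRestrict hN)

theorem smul_mem_of_forall_linearMap_eq_zero {A : Submodule R R} {A' B' : Submodule R M}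
    (h : IsCompl A' B') (hzero : ∀ g : A →ₗ[R] B', g = 0) {a : R} (ha : a ∈ A) (x : M) :
    a • x ∈ A' := by
  have := LinearMap.congr_fun (hzero <|
    B'.projectionOnto A' h.symm ∘ₗ LinearMap.toSpanSingleton R M x ∘ₗ A.subtype) ⟨a, ha⟩
  rwa [← projectionOnto_apply_eq_zero_iff h.symm]

theorem exists_isIdempotentElem_comm_of_isCompl {A B : Submodule R R} (h : IsCompl A B)
    (hA : ∀ a ∈ A, ∀ r, a * r ∈ A) (hB : ∀ b ∈ B, ∀ r, b * r ∈ B) :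
    ∃ e ∈ A, 1 - e ∈ B ∧ IsIdempotentElem e ∧ ∀ r, e * r = r * e := by
  obtain ⟨e, he, f, hf, hef⟩ := mem_sup.1 (h.sup_eq_top ▸ mem_top : (1 : R) ∈ A ⊔ B)
  obtain rfl : f = 1 - e := eq_sub_of_add_eq' hef
  have eq_zero : ∀ x ∈ A, x ∈ B → x = 0 := fun x hxA hxB => disjoint_def.1 h.disjoint x hxA hxB
  refine ⟨e, he, hf, ?_, fun r => ?_⟩
  · have : e * (1 - e) = 0 := eq_zero _ (hA e he _) (B.smul_mem e hf)
    rwa [mul_sub, mul_one, sub_eq_zero, eq_comm] at this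
  · have hAr : e * r - r * e ∈ A := A.sub_mem (hA e he r) (A.smul_mem r he)
    have hBr : e * r - r * e ∈ B := by
      have : e * r - r * e = r * (1 - e) - (1 - e) * r := by noncomm_ring
      rw [this]
      exact B.sub_mem (B.smul_mem r hf) (hB _ hf r)
    exact sub_eq_zero.1 (eq_zero _ hAr hBr)

theorem exists_isCGIdempotent (hs : IsCGSplitting R) (hc : IsCGCohereditary R) :
    ∃ e : R, IsCGIdempotent R e := by
  obtain ⟨A, B, hAB, hA, hB⟩ := hs R
  have smul_mem_left : ∀ {M : Type u} [AddCommGroup M] [Module R M] {A' B' : Submodule R M},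
      IsCompl A' B' → ZStar R B' = ⊥ → ∀ a ∈ A, ∀ x : M, a • x ∈ A' :=
    fun h hB' _ ha x => smul_mem_of_forall_linearMap_eq_zero h (hA.linearMap_eq_zero hB') ha x
  have smul_mem_right : ∀ {M : Type u} [AddCommGroup M] [Module R M] {A' B' : Submodule R M},
      IsCompl A' B' → IsCGTorsion R A' → ∀ b ∈ B, ∀ x : M, b • x ∈ B' :=
    fun h hA' _ hb x =>
      smul_mem_of_forall_linearMap_eq_zero h.symm (hc.linearMap_eq_zero hB hA') hb x
  obtain ⟨e, he, hf, hidem, hcomm⟩ := exists_isIdempotentElem_comm_of_isCompl hAB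
    (smul_mem_left hAB hB) (smul_mem_right hAB hA)
  refine ⟨e, hidem, hcomm, fun M _ _ _ hM => ?_, fun M _ _ hM => ?_⟩
  · obtain ⟨A', B', h, hA', hB'⟩ := hs M
    obtain ⟨m, hm⟩ := exists_ne (0 : M)
    have : Nontrivial A' := nontrivial_iff_ne_bot.2 <| (Submodule.ne_bot_iff A').2
      ⟨m, hM m ▸ smul_mem_left h hB' e he m, hm⟩
    exact fun hbot =>
      hA'.zStar_ne_bot (zStar_eq_bot_of_injective A'.subtype A'.injective_subtype hbot)
  · obtain ⟨A', B', h, hA', hB'⟩ := hs M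
    have hB'top : B' = ⊤ := eq_top_iff.2 fun m _ => by
      simpa [sub_smul, hM m] using smul_mem_right h hA' _ hf m
    subst hB'top
    exact zStar_eq_bot_of_injective topEquiv.symm.toLinearMap topEquiv.symm.injective hB'

end Splitting

section CentralIdempotent

variable {R : Type u} [Ring R] (M : Type u) [AddCommGroup M] [Module R M]

def LinearMap.smulCentral (e : R) (he : ∀ r, e * r = r * e) : M →ₗ[R] M where
  toFun m := e • m
  map_add' := smul_add e
  map_smul' r m := by simp only [RingHom.id_apply, smul_smul, he r]

variable {M} {e : R}

theorem LinearMap.isIdempotentElem_smulCentral (he : IsIdempotentElem e)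
    (hc : ∀ r, e * r = r * e) : IsIdempotentElem (smulCentral M e hc) :=
  LinearMap.ext fun m => by simp [smulCentral, smul_smul, he.eq]

theorem LinearMap.smulCentral_smul_eq_self {hc : ∀ r, e * r = r * e} (he : IsIdempotentElem e)
    (m : LinearMap.range (smulCentral M e hc)) : e • m = m :=
  Subtype.ext ((IsIdempotentElem.mem_range_iff (isIdempotentElem_smulCentral he hc)).1 m.2)

namespace IsCGIdempotent

variable (he : IsCGIdempotent R e)
include he

theorem isCGSplitting : IsCGSplitting R := by
  intro M _ _
  let p := LinearMap.smulCentral M e he.comm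
  have hp := LinearMap.isIdempotentElem_smulCentral (M := M) he.isIdempotentElem he.comm
  refine ⟨LinearMap.range p, LinearMap.ker p, LinearMap.IsIdempotentElem.isCompl hp,
    fun U V hUV => ?_, he.zStar_eq_bot _ fun m => Subtype.ext (LinearMap.mem_ker.1 m.2)⟩
  have := nontrivial_quotient_of_lt hUV
  refine he.zStar_ne_bot _ fun w => ?_
  induction w using Submodule.Quotient.induction_on with | _ v => ?_
  rw [← Submodule.Quotient.mk_smul]
  congr 1
  exact Subtype.ext (LinearMap.smulCentral_smul_eq_self he.isIdempotentElem (v : LinearMap.range p))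

theorem isCGCohereditary : IsCGCohereditary R := by
  intro M _ _ N _ _ f hf hM
  let p := LinearMap.smulCentral M e he.comm
  have hp : LinearMap.range p = ⊥ := by
    by_contra h
    have := nontrivial_iff_ne_bot.2 h
    exact he.zStar_ne_bot _ (LinearMap.smulCentral_smul_eq_self he.isIdempotentElem)
      (zStar_eq_bot_of_injective (LinearMap.range p).subtype (injective_subtype _) hM)
  refine he.zStar_eq_bot N fun n => ?_
  obtain ⟨m, rfl⟩ := hf n
  have : e • m = 0 := (mem_bot R).1 (hp ▸ LinearMap.mem_range_self p m)
  rw [← map_smul, this, map_zero]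

end IsCGIdempotent

end CentralIdempotent

section RestrictScalars

variable {R T M : Type*} [Ring R] [Ring T] [AddCommGroup M] [Module R M] [Module T M]
  [SMul R T] [IsScalarTower R T M]

theorem Submodule.restrictScalars_surjective_of_smul_one (h : ∀ t : T, ∃ r : R, r • (1 : T) = t) :
    Function.Surjective (restrictScalars R : Submodule T M → Submodule R M) := fun P =>
  ⟨{ P.toAddSubmonoid with
      smul_mem' := fun t m hm => by
        obtain ⟨r, rfl⟩ := h t
        rw [smul_one_smul]
        exact P.smul_mem r hm }, rfl⟩

theorem Submodule.isSuperfluous_restrictScalars_iff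
    (hsurj : Function.Surjective (restrictScalars R : Submodule T M → Submodule R M))
    {N : Submodule T M} : (N.restrictScalars R).IsSuperfluous ↔ N.IsSuperfluous := by
  refine ⟨fun hN X hX => ?_, fun hN X hX => ?_⟩
  · rw [← restrictScalars_eq_top_iff R] at hX ⊢
    exact hN _ (by rwa [← restrictScalars_sup])
  · obtain ⟨Y, rfl⟩ := hsurj X
    rw [← restrictScalars_sup, restrictScalars_eq_top_iff] at hX
    rw [restrictScalars_eq_top_iff]
    exact hN Y hX

end RestrictScalars

section RingHom

variable {R T : Type u} [Ring R] [Ring T] (π : R →+* T) {M : Type u} [AddCommGroup M]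
  [Module R M] [Module T M]

theorem RingHom.isScalarTower_of_map_smul [SMul R T] (hT : ∀ (r : R) (t : T), r • t = π r * t)
    (hM : ∀ (r : R) (m : M), π r • m = r • m) : IsScalarTower R T M :=
  ⟨fun r t m => by rw [hT, mul_smul, hM]⟩

theorem RingHom.restrictScalars_surjective [SMul R T] (hT : ∀ (r : R) (t : T), r • t = π r * t)
    [IsScalarTower R T M] (hπ : Function.Surjective π) :
    Function.Surjective (restrictScalars R : Submodule T M → Submodule R M) :=
  restrictScalars_surjective_of_smul_one fun t =>
    (hπ t).imp fun r hr => by rw [hT, mul_one, hr]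

theorem IsSmallModule.of_surjective_ringHom (hπ : Function.Surjective π)
    (hM : ∀ (r : R) (m : M), π r • m = r • m) (h : IsSmallModule T M) : IsSmallModule R M := by
  obtain ⟨L, _, _, f, hf, hL⟩ := h
  let : Module R L := Module.compHom L π
  let : SMul R T := ⟨fun r t => π r * t⟩
  have := π.isScalarTower_of_map_smul (fun _ _ => rfl) hM
  have := π.isScalarTower_of_map_smul (M := L) (fun _ _ => rfl) fun _ _ => rfl
  refine ⟨L, _, _, f.restrictScalars R, hf, ?_⟩
  change (LinearMap.range (f.restrictScalars R)).IsSuperfluous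
  rw [LinearMap.range_restrictScalars]
  exact (isSuperfluous_restrictScalars_iff (π.restrictScalars_surjective (fun _ _ => rfl) hπ)).2 hL

end RingHom

/-- Up to isomorphism, `π` is the projection of `R ≅ e R × (1 - e) R` onto its factor `e R`. -/
structure RingHom.IsBlockProjection {R T : Type u} [Ring R] [Ring T] (π : R →+* T) (e : R) :
    Prop where
  surjective : Function.Surjective π
  map_eq_one : π e = 1
  mul_eq_zero_of_map_eq_zero : ∀ r, π r = 0 → r * e = 0
  comm : ∀ r, e * r = r * e

namespace RingHom.IsBlockProjection

variable {R T : Type u} [Ring R] [Ring T] {π : R →+* T} {e : R} (hπ : π.IsBlockProjection e)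
include hπ

theorem isIdempotentElem : IsIdempotentElem e := by
  have := hπ.mul_eq_zero_of_map_eq_zero (1 - e) (by rw [map_sub, map_one, hπ.map_eq_one, sub_self])
  rwa [sub_mul, one_mul, sub_eq_zero, eq_comm] at this

section Module

variable {M : Type u} [AddCommGroup M] [Module R M] (hM : ∀ m : M, e • m = m)
include hM

theorem surjInv_smul (r : R) (m : M) : Function.surjInv hπ.surjective (π r) • m = r • m := by
  rw [← sub_eq_zero, ← sub_smul, ← hM m, smul_smul, hπ.mul_eq_zero_of_map_eq_zero _
    (by rw [map_sub, Function.surjInv_eq hπ.surjective, sub_self]), zero_smul]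

noncomputable abbrev module : Module T M :=
  letI : SMul T M := ⟨fun t m => Function.surjInv hπ.surjective t • m⟩
  hπ.surjective.moduleLeft π (hπ.surjInv_smul hM)

end Module

section Transfer

variable {M : Type u} [AddCommGroup M] [Module R M] [Module T M]
  (hM : ∀ (r : R) (m : M), π r • m = r • m)
include hM

theorem isSmallModule (h : IsSmallModule R M) : IsSmallModule T M := by
  obtain ⟨L, _, _, f, hf, hL⟩ := h
  let p := LinearMap.smulCentral L e hπ.comm
  have hpe := LinearMap.smulCentral_smul_eq_self (M := L) (hc := hπ.comm) hπ.isIdempotentElem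
  let : Module T (LinearMap.range p) := hπ.module hpe
  have hp : ∀ (r : R) (x : LinearMap.range p), π r • x = r • x := hπ.surjInv_smul hpe
  have he : ∀ m : M, e • m = m := fun m => by rw [← hM, hπ.map_eq_one, one_smul]
  let g : M →ₗ[T] LinearMap.range p :=
    { p.rangeRestrict ∘ₗ f with
      map_smul' := fun t m => by
        obtain ⟨r, rfl⟩ := hπ.surjective t
        simp only [AddHom.toFun_eq_coe, LinearMap.coe_toAddHom, RingHom.id_apply, hM, hp,
          map_smul] }
  have hg : ∀ m, (g m : L) = f m := fun m => by
    change e • f m = f m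
    rw [← map_smul, he]
  refine ⟨_, _, _, g, fun a b hab => hf (by rw [← hg, hab, hg]), ?_⟩
  let : SMul R T := ⟨fun r t => π r * t⟩
  have := π.isScalarTower_of_map_smul (fun _ _ => rfl) hp
  change (LinearMap.range g).IsSuperfluous
  rw [← isSuperfluous_restrictScalars_iff
    (π.restrictScalars_surjective (fun _ _ => rfl) hπ.surjective)]
  have := IsSuperfluous.map hL p.rangeRestrict p.surjective_rangeRestrict
  rw [← LinearMap.range_comp] at this
  exact this

theorem zStar_eq_bot_iff : ZStar T M = ⊥ ↔ ZStar R M = ⊥ := by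
  let : SMul R T := ⟨fun r t => π r * t⟩
  have := π.isScalarTower_of_map_smul (fun _ _ => rfl) hM
  have hsurj := π.restrictScalars_surjective (M := M) (fun _ _ => rfl) hπ.surjective
  simp only [_root_.zStar_eq_bot_iff]
  refine ⟨fun h P hP => ?_, fun h Q hQ => ?_⟩
  · obtain ⟨Q, rfl⟩ := hsurj P
    rw [restrictScalars_eq_bot_iff]
    exact h Q ((hπ.isSmallModule (fun r x => Subtype.ext (hM r x)) hP).of_linearEquiv
      (Q.restrictScalarsEquiv R))
  · rw [← restrictScalars_eq_bot_iff R]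
    exact h _ ((hQ.of_linearEquiv (Q.restrictScalarsEquiv R).symm).of_surjective_ringHom π
      hπ.surjective fun r x => Subtype.ext (hM r x))

end Transfer

end RingHom.IsBlockProjection

section VRing

variable (S : Type u) [Ring S]

def IsLeftVRing : Prop :=
  ∀ (M : Type u) [AddCommGroup M] [Module S M], IsSimpleModule S M → Module.Injective S M

variable {S} {M E L : Type u} [AddCommGroup M] [Module S M] [AddCommGroup E] [Module S E]
  [AddCommGroup L] [Module S L]

theorem Submodule.IsSuperfluous.le_ker {N : Submodule S L} (hN : N.IsSuperfluous)
    [IsSimpleModule S M] (g : L →ₗ[S] M) : N ≤ LinearMap.ker g := by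
  rcases (g ∘ₗ N.subtype).surjective_or_eq_zero with h | h
  · have : N ⊔ LinearMap.ker g = ⊤ := eq_top_iff.2 fun l _ => by
      obtain ⟨n, hn⟩ := h (g l)
      exact mem_sup.2 ⟨n, n.2, l - n, by simp [← hn], add_sub_cancel _ l⟩
    rw [hN _ this]
    exact le_top
  · exact fun n hn => LinearMap.congr_fun h ⟨n, hn⟩

theorem IsLeftVRing.exists_linearMap_ne_zero (hS : IsLeftVRing S) {x : L} (hx : x ≠ 0) :
    ∃ (Q : Type u) (_ : AddCommGroup Q) (_ : Module S Q) (_ : IsSimpleModule S Q)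
      (g : L →ₗ[S] Q), g x ≠ 0 := by
  let C := S ∙ x
  have : Nontrivial C := nontrivial_iff_ne_bot.2 ((span_singleton_eq_bot).not.2 hx)
  obtain ⟨U, hU, -⟩ := (eq_top_or_exists_le_coatom (⊥ : Submodule S C)).resolve_left bot_ne_top
  have hxU : (⟨x, mem_span_singleton_self x⟩ : C) ∉ U := fun hxU => hU.1 <| eq_top_iff.2
    fun c _ => by
      obtain ⟨s, hs⟩ := mem_span_singleton.1 c.2
      rw [show c = s • ⟨x, mem_span_singleton_self x⟩ from Subtype.ext hs.symm]
      exact U.smul_mem s hxU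
  have := isSimpleModule_iff_isCoatom.2 hU
  obtain ⟨g, hg⟩ := Module.Injective.out (self := hS _ this) C.subtype C.injective_subtype U.mkQ
  refine ⟨_, _, _, this, g, fun h => hxU ?_⟩
  rw [← Submodule.Quotient.mk_eq_zero, ← mkQ_apply, ← hg]
  exact h

theorem IsLeftVRing.zStar_eq_bot (hS : IsLeftVRing S) : ZStar S M = ⊥ := by
  refine zStar_eq_bot_iff.2 fun P ⟨L, _, _, f, hf, hL⟩ => eq_bot_iff.2 fun x hx => ?_
  by_contra hx0
  have hfx : f ⟨x, hx⟩ ≠ 0 := by simpa [map_eq_zero_iff f hf] using hx0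
  obtain ⟨Q, _, _, _, g, hg⟩ := hS.exists_linearMap_ne_zero hfx
  exact hg (IsSuperfluous.le_ker hL g (LinearMap.mem_range_self f _))

theorem Module.Injective.of_leftInverse [Module.Injective S E] (i : M →ₗ[S] E) (r : E →ₗ[S] M)
    (h : ∀ m, r (i m) = m) : Module.Injective S M where
  out X Y _ _ _ _ f hf g := by
    obtain ⟨g', hg'⟩ := Module.Injective.out (Q := E) f hf (i ∘ₗ g)
    exact ⟨r ∘ₗ g', fun x => by simp [hg', h]⟩

theorem exists_injective_linearMap_to_injective (S M : Type u) [Ring S] [AddCommGroup M]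
    [Module S M] : ∃ (E : Type u) (_ : AddCommGroup E) (_ : Module S E) (i : M →ₗ[S] E),
      Function.Injective i ∧ Module.Injective S E := by
  have := ModuleCat.enoughInjectives.{u} S
  let ι := CategoryTheory.Injective.ι (ModuleCat.of S M)
  exact ⟨_, _, _, ι.hom, (ModuleCat.mono_iff_injective ι).1 inferInstance,
    Module.injective_module_of_injective_object S _
      (inj := CategoryTheory.Injective.injective_under (ModuleCat.of S M))⟩

theorem IsSimpleModule.isSmallModule_of_not_injective [IsSimpleModule S M]
    (hM : ¬ Module.Injective S M) : IsSmallModule S M := by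
  obtain ⟨E, _, _, i, hi, hE⟩ := exists_injective_linearMap_to_injective S M
  refine ⟨E, _, _, i, hi, fun X hX => ?_⟩
  by_cases hle : LinearMap.range i ≤ X
  · rwa [sup_eq_right.2 hle] at hX
  let e := LinearEquiv.ofInjective i hi
  have hatom : IsAtom (LinearMap.range i) :=
    isSimpleModule_iff_isAtom.1 (IsSimpleModule.congr e.symm)
  have hc : IsCompl (LinearMap.range i) X :=
    ⟨hatom.not_le_iff_disjoint.1 hle, codisjoint_iff.2 hX⟩
  exact (hM (Module.Injective.of_leftInverse i (e.symm ∘ₗ (LinearMap.range i).projectionOnto X hc)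
    fun m => by simp [show i m = e m from rfl, projectionOnto_apply_left])).elim

end VRing

section Product

variable {R T S : Type u} [Ring R] [Ring T] [Ring S]

theorem RingEquiv.isBlockProjection_fst (φ : R ≃+* T × S) :
    ((RingHom.fst T S).comp φ.toRingHom).IsBlockProjection (φ.symm (1, 0)) where
  surjective t := ⟨φ.symm (t, 0), by simp⟩
  map_eq_one := by simp
  mul_eq_zero_of_map_eq_zero r hr := φ.injective (by ext <;> simp_all)
  comm r := φ.injective (by ext <;> simp)

theorem RingEquiv.isBlockProjection_snd (φ : R ≃+* T × S) :
    ((RingHom.snd T S).comp φ.toRingHom).IsBlockProjection (1 - φ.symm (1, 0)) where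
  surjective s := ⟨φ.symm (0, s), by simp⟩
  map_eq_one := by simp
  mul_eq_zero_of_map_eq_zero r hr := φ.injective (by ext <;> simp_all)
  comm r := φ.injective (by ext <;> simp)

theorem zStar_ne_bot_of_isCGTorsion_self (hT : IsCGTorsion T T) {M : Type u} [AddCommGroup M]
    [Module T M] [Nontrivial M] : ZStar T M ≠ ⊥ := fun hbot => by
  obtain ⟨m, hm⟩ := exists_ne (0 : M)
  have := LinearMap.congr_fun (hT.linearMap_eq_zero hbot (LinearMap.toSpanSingleton T M m)) 1
  exact hm (by simpa using this)

namespace RingHom.IsBlockProjection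

variable {π : R →+* T} {e : R} (hπ : π.IsBlockProjection e)
include hπ

theorem isCGTorsion_self_iff : IsCGTorsion T T ↔ ∀ (M : Type u) [AddCommGroup M] [Module R M]
    [Nontrivial M], (∀ m : M, e • m = m) → ZStar R M ≠ ⊥ := by
  refine ⟨fun hT M _ _ _ hM => ?_, fun h U V hUV => ?_⟩
  · let := hπ.module hM
    rw [Ne, ← hπ.zStar_eq_bot_iff (hπ.surjInv_smul hM)]
    exact zStar_ne_bot_of_isCGTorsion_self hT
  · have := nontrivial_quotient_of_lt hUV
    let : Module R (V ⧸ U.comap V.subtype) := Module.compHom _ π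
    rw [Ne, hπ.zStar_eq_bot_iff fun _ _ => rfl]
    exact h _ fun m => (congrArg (· • m) hπ.map_eq_one).trans (one_smul T m)

theorem isLeftVRing_iff : IsLeftVRing T ↔ ∀ (M : Type u) [AddCommGroup M] [Module R M],
    (∀ m : M, e • m = m) → ZStar R M = ⊥ := by
  refine ⟨fun hT M _ _ hM => ?_, fun h M _ _ hM => ?_⟩
  · let := hπ.module hM
    rw [← hπ.zStar_eq_bot_iff (hπ.surjInv_smul hM)]
    exact hT.zStar_eq_bot
  · by_contra hinj
    have := hM.nontrivial
    let : Module R M := Module.compHom _ π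
    refine zStar_ne_bot_of_isSmallModule (IsSimpleModule.isSmallModule_of_not_injective hinj) ?_
    rw [hπ.zStar_eq_bot_iff fun _ _ => rfl]
    exact h _ fun m => (congrArg (· • m) hπ.map_eq_one).trans (one_smul T m)

end RingHom.IsBlockProjection

theorem RingEquiv.isCGIdempotent_iff (φ : R ≃+* T × S) :
    IsCGIdempotent R (φ.symm (1, 0)) ↔ IsCGTorsion T T ∧ IsLeftVRing S := by
  have hT := φ.isBlockProjection_fst
  rw [hT.isCGTorsion_self_iff, φ.isBlockProjection_snd.isLeftVRing_iff]
  have smul_eq_zero_iff : ∀ {M : Type u} [AddCommGroup M] [Module R M] (m : M),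
      (1 - φ.symm (1, 0)) • m = m ↔ φ.symm (1, 0) • m = 0 := fun m => by
    rw [sub_smul, one_smul, sub_eq_self]
  refine ⟨fun h => ⟨h.zStar_ne_bot, fun M _ _ hM => h.zStar_eq_bot M fun m => ?_⟩,
    fun h => ⟨hT.isIdempotentElem, hT.comm, h.1, fun M _ _ hM => h.2 M fun m => ?_⟩⟩
  · exact (smul_eq_zero_iff m).1 (hM m)
  · exact (smul_eq_zero_iff m).2 (hM m)

theorem exists_ringEquiv_prod_symm_eq {e : R} (he : IsIdempotentElem e)
    (hc : ∀ r, e * r = r * e) :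
    ∃ (T S : Type u) (_ : Ring T) (_ : Ring S) (φ : R ≃+* T × S), φ.symm (1, 0) = e := by
  have hcoi := CompleteOrthogonalIdempotents.of_isIdempotentElem he
  have hcentral : ∀ i, IsMulCentral (![e, 1 - e] i) := by
    intro i
    refine Semigroup.mem_center_iff.2 fun r => ?_
    fin_cases i
    · exact (hc r).symm
    · simp [mul_sub, sub_mul, hc r]
  let φ := (hcoi.ringEquivOfIsMulCentral hcentral).trans (RingEquiv.piFinTwo _)
  refine ⟨_, _, _, _, φ, φ.symm_apply_eq.2 (Prod.ext (Subtype.ext ?_) (Subtype.ext ?_))⟩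
  · change e = e * e * e
    rw [he.eq, he.eq]
  · change 0 = (1 - e) * e * (1 - e)
    rw [sub_mul, one_mul, he.eq, sub_self, zero_mul]

end Product

/-- The dual Goldie torsion theory of `R` is splitting and cohereditary iff `R` is isomorphic, as
a ring, to a product `T × S` with `T` left almost small and `S` a left V-ring. -/
theorem stmt_10 (R : Type u) [Ring R] :
    ((∀ (M : Type u) [AddCommGroup M] [Module R M],
        ∃ T F : Submodule R M, IsCompl T F ∧ IsCGTorsion R ↥T ∧ ZStar R ↥F = ⊥) ∧
      (∀ (M : Type u) [AddCommGroup M] [Module R M] (N : Type u) [AddCommGroup N] [Module R N]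
        (f : M →ₗ[R] N), Function.Surjective f → ZStar R M = ⊥ → ZStar R N = ⊥)) ↔
    (∃ (T S : Type u) (_ : Ring T) (_ : Ring S),
      Nonempty (R ≃+* T × S) ∧ IsCGTorsion T T ∧
        (∀ (M : Type u) [AddCommGroup M] [Module S M], IsSimpleModule S M →
          Module.Injective S M)) := by
  constructor
  · rintro ⟨hs, hc⟩
    obtain ⟨e, he⟩ := exists_isCGIdempotent hs hc
    obtain ⟨T, S, _, _, φ, rfl⟩ := exists_ringEquiv_prod_symm_eq he.isIdempotentElem he.comm
    exact ⟨T, S, _, _, ⟨φ⟩, φ.isCGIdempotent_iff.1 he⟩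
  · rintro ⟨T, S, _, _, ⟨φ⟩, hT, hS⟩
    have he := φ.isCGIdempotent_iff.2 ⟨hT, hS⟩
    exact ⟨he.isCGSplitting, he.isCGCohereditary⟩
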